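/- arXiv:2111.01010 — 3 statements merged into one kernel-verified Lean document; each statement's English description precedes it below -/
import Mathlib

section
/- For every code C on n neurons, the following are equivalent: (i) C has an open convex realization in ℝ^1; (ii) C has a closed convex realization in ℝ^1; (iii) C has a non-degenerate (open or closed) convex realization in ℝ^1. In particular, odim(C) = 1 if and only if cdim(C) = 1 if and only if nddim(C) = 1. -/
open Set

noncomputable section

/-- Euclidean space `ℝ^d`. -/
abbrev Euc (d : ℕ) : Type := EuclideanSpace ℝ (Fin d)

/-- The code of a collection of sets `U = (U 0, …, U (n-1))` in `ℝ^d`. -/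
def codeOf {n d : ℕ} (U : Fin n → Set (Euc d)) : Set (Finset (Fin n)) :=
  {σ | ∃ p : Euc d, ∀ i : Fin n, p ∈ U i ↔ i ∈ σ}

/-- `U` is an open convex realization of the code `C`. -/
def IsOpenReal {n d : ℕ} (C : Set (Finset (Fin n))) (U : Fin n → Set (Euc d)) : Prop :=
  (∀ i, Convex ℝ (U i)) ∧ (∀ i, IsOpen (U i)) ∧ codeOf U = C

/-- `X` is a closed convex realization of the code `C`. -/
def IsClosedReal {n d : ℕ} (C : Set (Finset (Fin n))) (X : Fin n → Set (Euc d)) : Prop :=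
  (∀ i, Convex ℝ (X i)) ∧ (∀ i, IsClosed (X i)) ∧ codeOf X = C

/-- `C` has an open convex realization in `ℝ^d`. -/
def HasOpenReal {n : ℕ} (C : Set (Finset (Fin n))) (d : ℕ) : Prop :=
  ∃ U : Fin n → Set (Euc d), IsOpenReal C U

/-- `C` has a closed convex realization in `ℝ^d`. -/
def HasClosedReal {n : ℕ} (C : Set (Finset (Fin n))) (d : ℕ) : Prop :=
  ∃ X : Fin n → Set (Euc d), IsClosedReal C X

/-- `U` is a non-degenerate open convex realization of `C`: it is an open convex
realization and the closures of its sets realize the same code. -/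
def IsNondegOpenReal {n d : ℕ} (C : Set (Finset (Fin n))) (U : Fin n → Set (Euc d)) : Prop :=
  IsOpenReal C U ∧ codeOf (fun i => closure (U i)) = C

/-- `X` is a non-degenerate closed convex realization of `C`: it is a closed convex
realization and the interiors of its sets realize the same code. -/
def IsNondegClosedReal {n d : ℕ} (C : Set (Finset (Fin n))) (X : Fin n → Set (Euc d)) : Prop :=
  IsClosedReal C X ∧ codeOf (fun i => interior (X i)) = C

/-- `C` has a non-degenerate (open or closed) convex realization in `ℝ^d`. -/
def HasNondegReal {n : ℕ} (C : Set (Finset (Fin n))) (d : ℕ) : Prop :=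
  (∃ U : Fin n → Set (Euc d), IsNondegOpenReal C U) ∨
  (∃ X : Fin n → Set (Euc d), IsNondegClosedReal C X)

/-- Open embedding dimension (`⊤` if no open convex realization exists). -/
def odim {n : ℕ} (C : Set (Finset (Fin n))) : ℕ∞ :=
  sInf {e : ℕ∞ | ∃ d : ℕ, e = d ∧ HasOpenReal C d}

/-- Closed embedding dimension (`⊤` if no closed convex realization exists). -/
def cdim {n : ℕ} (C : Set (Finset (Fin n))) : ℕ∞ :=
  sInf {e : ℕ∞ | ∃ d : ℕ, e = d ∧ HasClosedReal C d}

/-- Non-degenerate embedding dimension (`⊤` if no non-degenerate realization exists). -/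
def nddim {n : ℕ} (C : Set (Finset (Fin n))) : ℕ∞ :=
  sInf {e : ℕ∞ | ∃ d : ℕ, e = d ∧ HasNondegReal C d}


/-!
Let `U` realize `C` in `ℝ` by open intervals or by closed intervals. Fix a finite set `P` realizing
every codeword and let `X i` be the convex hull of `P ∩ U i`. Points of `P` keep their codewords,
points outside the hull of `P` get `∅`, and a point strictly between consecutive points `p < p'`
of `P` gets `pattern U p ∩ pattern U p'`. `U` realizes this codeword somewhere in `[p, p']`:
otherwise `[p, p']` would be covered by the union of the `U i` containing `p` but not `p'` and the
union of those containing `p'` but not `p`, which are disjoint on `[p, p']` and both open or both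
closed. Hence `X` realizes `C`, and so do the thickenings of the `X i` by less than half the
minimal gap of `P` and their closures: each point takes the codeword of `X` at a nearby point of
`P` or at itself.
-/

open Metric

section Pattern

variable {α β : Type*} {n : ℕ}

open scoped Classical in
def pattern (U : Fin n → Set α) (x : α) : Finset (Fin n) :=
  {i | x ∈ U i}

theorem mem_pattern {U : Fin n → Set α} {x : α} {i : Fin n} : i ∈ pattern U x ↔ x ∈ U i := by
  simp [pattern]

theorem pattern_eq_pattern_iff {U : Fin n → Set α} {V : Fin n → Set β} {x : α} {y : β} :
    pattern U x = pattern V y ↔ ∀ i, x ∈ U i ↔ y ∈ V i := by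
  simp only [Finset.ext_iff, mem_pattern]

theorem pattern_eq_empty_iff {U : Fin n → Set α} {x : α} : pattern U x = ∅ ↔ ∀ i, x ∉ U i := by
  simp only [Finset.eq_empty_iff_forall_notMem, mem_pattern]

theorem codeOf_eq_range_pattern {d : ℕ} (U : Fin n → Set (Euc d)) :
    codeOf U = range (pattern U) := by
  ext σ
  simp only [codeOf, mem_ofPred_eq, mem_range, Finset.ext_iff, mem_pattern]

theorem range_pattern_preimage (e : α ≃ β) (V : Fin n → Set β) :
    range (pattern fun i => e ⁻¹' V i) = range (pattern V) :=
  e.surjective.range_comp (pattern V)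

end Pattern

theorem Real.mem_convexHull_iff {s : Set ℝ} {x : ℝ} :
    x ∈ convexHull ℝ s ↔ ∃ a ∈ s, ∃ b ∈ s, a ≤ x ∧ x ≤ b := by
  refine ⟨fun hx => convexHull_min (t := {x | ∃ a ∈ s, ∃ b ∈ s, a ≤ x ∧ x ≤ b})
    (fun y hy => ⟨y, hy, y, hy, le_rfl, le_rfl⟩) ?_ hx, ?_⟩
  · refine OrdConnected.convex ⟨?_⟩
    rintro y ⟨a, ha, -, -, hay, -⟩ z ⟨-, -, b, hb, -, hzb⟩ w ⟨hyw, hwz⟩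
    exact ⟨a, ha, b, hb, hay.trans hyw, hwz.trans hzb⟩
  · rintro ⟨a, ha, b, hb, hax, hxb⟩
    exact (convex_convexHull ℝ s).ordConnected.out (subset_convexHull ℝ s ha)
      (subset_convexHull ℝ s hb) ⟨hax, hxb⟩

theorem Set.Finite.exists_pos_pairwise_lt_dist {X : Type*} [MetricSpace X] {s : Set X}
    (hs : s.Finite) : ∃ δ > 0, s.Pairwise fun a b => δ < dist a b := by
  by_cases hnt : s.Nontrivial
  · have hpos := hs.infsep_pos_iff_nontrivial.2 hnt
    exact ⟨s.infsep / 2, half_pos hpos, fun a ha b hb hab =>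
      (half_lt_self hpos).trans_le (infsep_le_dist_of_mem ha hb hab)⟩
  · exact ⟨1, one_pos, fun a ha b hb hab => (hnt ⟨a, ha, b, hb, hab⟩).elim⟩

section Hull

theorem exists_mem_Icc_forall_mem_iff_and {ι : Type*} [Finite ι] {U : ι → Set ℝ}
    (hU : ∀ i, (U i).OrdConnected) (htop : (∀ i, IsOpen (U i)) ∨ (∀ i, IsClosed (U i)))
    {P : Set ℝ} (hP : ∀ y, ∃ q ∈ P, ∀ i, q ∈ U i ↔ y ∈ U i) {p p' : ℝ} (hpp' : p ≤ p')
    (hgap : ∀ q ∈ P, q ≤ p ∨ p' ≤ q) :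
    ∃ y ∈ Icc p p', ∀ i, y ∈ U i ↔ p ∈ U i ∧ p' ∈ U i := by
  have hside : ∀ y ∈ Icc p p', (∀ i, y ∈ U i → p ∈ U i) ∨ (∀ i, y ∈ U i → p' ∈ U i) := by
    intro y hy
    obtain ⟨q, hqP, hq⟩ := hP y
    refine (hgap q hqP).imp (fun hqp i hi => ?_) (fun hqp i hi => ?_)
    · exact (hU i).out ((hq i).2 hi) hi ⟨hqp, hy.1⟩
    · exact (hU i).out hi ((hq i).2 hi) ⟨hy.2, hqp⟩
  set L := ⋃ i ∈ {i | p ∈ U i ∧ p' ∉ U i}, U i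
  set R := ⋃ i ∈ {i | p' ∈ U i ∧ p ∉ U i}, U i
  have hLR : ∀ y ∈ Icc p p', y ∉ L ∩ R := by
    rintro y hy ⟨hyL, hyR⟩
    simp only [L, R, mem_iUnion₂, mem_ofPred_eq] at hyL hyR
    obtain ⟨i, ⟨-, hi⟩, hyi⟩ := hyL
    obtain ⟨j, ⟨-, hj⟩, hyj⟩ := hyR
    exact (hside y hy).elim (fun h => hj (h j hyj)) (fun h => hi (h i hyi))
  obtain ⟨y, hy, hyLR⟩ : ∃ y ∈ Icc p p', y ∉ L ∪ R := by
    by_contra! hcover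
    have hpL : p ∈ L := (hcover p ⟨le_rfl, hpp'⟩).resolve_right (by simp [R])
    have hp'R : p' ∈ R := (hcover p' ⟨hpp', le_rfl⟩).resolve_left (by simp [L])
    obtain ⟨y, hy, hyLR⟩ : (Icc p p' ∩ (L ∩ R)).Nonempty := by
      rcases htop with hopen | hclosed
      · exact isPreconnected_Icc L R (isOpen_biUnion fun i _ => hopen i)
          (isOpen_biUnion fun i _ => hopen i) hcover ⟨p, ⟨le_rfl, hpp'⟩, hpL⟩
          ⟨p', ⟨hpp', le_rfl⟩, hp'R⟩
      · exact isPreconnected_closed_iff.1 isPreconnected_Icc L R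
          ((toFinite _).isClosed_biUnion fun i _ => hclosed i)
          ((toFinite _).isClosed_biUnion fun i _ => hclosed i) hcover
          ⟨p, ⟨le_rfl, hpp'⟩, hpL⟩ ⟨p', ⟨hpp', le_rfl⟩, hp'R⟩
    exact hLR y hy hyLR
  refine ⟨y, hy, fun i => ⟨fun hyi => ?_, fun ⟨hpi, hp'i⟩ => (hU i).out hpi hp'i hy⟩⟩
  by_contra hboth
  rcases hside y hy with h | h
  · exact hyLR (.inl (mem_biUnion (x := i) ⟨h i hyi, fun h' => hboth ⟨h i hyi, h'⟩⟩ hyi))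
  · exact hyLR (.inr (mem_biUnion (x := i) ⟨h i hyi, fun h' => hboth ⟨h', h i hyi⟩⟩ hyi))

variable {P U : Set ℝ} {x : ℝ}

theorem mem_convexHull_inter_iff_of_mem (hU : U.OrdConnected) (hx : x ∈ P) :
    x ∈ convexHull ℝ (P ∩ U) ↔ x ∈ U :=
  ⟨fun h => convexHull_min inter_subset_right hU.convex h, fun h => subset_convexHull ℝ _ ⟨hx, h⟩⟩

theorem mem_convexHull_inter_iff_of_mem_Icc (hU : U.OrdConnected) {p p' : ℝ} (hp : p ∈ P)
    (hp' : p' ∈ P) (hx : x ∈ Icc p p') (hmax : ∀ q ∈ P, q ≤ x → q ≤ p)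
    (hmin : ∀ q ∈ P, x ≤ q → p' ≤ q) :
    x ∈ convexHull ℝ (P ∩ U) ↔ p ∈ U ∧ p' ∈ U := by
  rw [Real.mem_convexHull_iff]
  constructor
  · rintro ⟨a, ⟨haP, haU⟩, b, ⟨hbP, hbU⟩, hax, hxb⟩
    have hap := hmax a haP hax
    have hp'b := hmin b hbP hxb
    exact ⟨hU.out haU hbU ⟨hap, hx.1.trans (hx.2.trans hp'b)⟩,
      hU.out haU hbU ⟨(hap.trans hx.1).trans hx.2, hp'b⟩⟩
  · rintro ⟨hpU, hp'U⟩
    exact ⟨p, ⟨hp, hpU⟩, p', ⟨hp', hp'U⟩, hx⟩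

variable {n : ℕ}

theorem pattern_convexHull_inter_of_mem {U : Fin n → Set ℝ} (hU : ∀ i, (U i).OrdConnected)
    (hx : x ∈ P) : pattern (fun i => convexHull ℝ (P ∩ U i)) x = pattern U x :=
  pattern_eq_pattern_iff.2 fun i => mem_convexHull_inter_iff_of_mem (hU i) hx

theorem range_pattern_convexHull_inter {U : Fin n → Set ℝ} (hU : ∀ i, (U i).OrdConnected)
    (htop : (∀ i, IsOpen (U i)) ∨ (∀ i, IsClosed (U i))) {P : Finset ℝ}
    (hP : ∀ y, ∃ q ∈ P, pattern U q = pattern U y) (hempty : ∅ ∈ range (pattern U)) :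
    range (pattern fun i => convexHull ℝ (↑P ∩ U i)) = range (pattern U) := by
  refine Subset.antisymm ?_ ?_
  · rintro _ ⟨x, rfl⟩
    by_cases hx : (∃ q ∈ P, q ≤ x) ∧ (∃ q ∈ P, x ≤ q)
    · obtain ⟨⟨q, hq, hqx⟩, ⟨q', hq', hxq'⟩⟩ := hx
      obtain ⟨p, hp, hmax⟩ := (P.filter (· ≤ x)).exists_max_image id
        ⟨q, Finset.mem_filter.2 ⟨hq, hqx⟩⟩
      obtain ⟨p', hp', hmin⟩ := (P.filter (x ≤ ·)).exists_min_image id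
        ⟨q', Finset.mem_filter.2 ⟨hq', hxq'⟩⟩
      simp only [Finset.mem_filter, id, and_imp] at hp hp' hmax hmin
      obtain ⟨y, -, hy⟩ := exists_mem_Icc_forall_mem_iff_and hU htop (P := P)
        (fun y => (hP y).imp fun q ⟨hq, h⟩ => ⟨hq, pattern_eq_pattern_iff.1 h⟩)
        (hp.2.trans hp'.2) (fun q hq => (le_total q x).imp (hmax q hq) (hmin q hq))
      exact ⟨y, pattern_eq_pattern_iff.2 fun i => (hy i).trans
        (mem_convexHull_inter_iff_of_mem_Icc (hU i) hp.1 hp'.1 ⟨hp.2, hp'.2⟩ hmax hmin).symm⟩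
    · convert hempty
      refine pattern_eq_empty_iff.2 fun i hxi => hx ?_
      obtain ⟨a, ⟨haP, -⟩, b, ⟨hbP, -⟩, hax, hxb⟩ := Real.mem_convexHull_iff.1 hxi
      exact ⟨⟨a, haP, hax⟩, ⟨b, hbP, hxb⟩⟩
  · rintro _ ⟨y, rfl⟩
    obtain ⟨q, hq, hqy⟩ := hP y
    exact ⟨q, (pattern_convexHull_inter_of_mem hU hq).trans hqy⟩

end Hull

section Thickening

variable {P S : Set ℝ} {r x : ℝ}

theorem mem_convexHull_of_dist_le (hsep : P.Pairwise fun a b => 2 * r < dist a b)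
    (hSP : S ⊆ P) {e y : ℝ} (he : e ∈ P) (hy : y ∈ convexHull ℝ S) (hxe : dist x e ≤ r)
    (hxy : dist x y ≤ r) : e ∈ convexHull ℝ S := by
  obtain ⟨a, ha, b, hb, hay, hyb⟩ := Real.mem_convexHull_iff.1 hy
  have hey : |e - y| ≤ 2 * r := by
    rw [← Real.dist_eq]
    linarith [dist_triangle_left e y x]
  refine Real.mem_convexHull_iff.2 ⟨a, ha, b, hb, ?_, ?_⟩
  · by_contra! hea
    have : 2 * r < dist a e := hsep (hSP ha) he hea.ne'
    rw [Real.dist_eq, abs_of_pos (sub_pos.2 hea)] at this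
    linarith [(abs_le.1 hey).1]
  · by_contra! hbe
    have : 2 * r < dist e b := hsep he (hSP hb) hbe.ne'
    rw [Real.dist_eq, abs_of_pos (sub_pos.2 hbe)] at this
    linarith [(abs_le.1 hey).2]

theorem exists_dist_le_of_notMem_convexHull {y : ℝ} (hx : x ∉ convexHull ℝ S)
    (hy : y ∈ convexHull ℝ S) : ∃ e ∈ S, dist x e ≤ dist x y := by
  obtain ⟨a, ha, b, hb, hay, hyb⟩ := Real.mem_convexHull_iff.1 hy
  rcases lt_or_ge x a with hxa | hax
  · refine ⟨a, ha, ?_⟩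
    rw [dist_comm x a, dist_comm x y, Real.dist_eq, Real.dist_eq, abs_of_pos (by linarith),
      abs_of_pos (by linarith)]
    linarith
  · have hbx : b < x :=
      lt_of_not_ge fun hxb => hx (Real.mem_convexHull_iff.2 ⟨a, ha, b, hb, hax, hxb⟩)
    refine ⟨b, hb, ?_⟩
    rw [Real.dist_eq, Real.dist_eq, abs_of_pos (by linarith), abs_of_pos (by linarith)]
    linarith

theorem mem_thickening_convexHull_iff_of_dist_lt
    (hsep : P.Pairwise fun a b => 2 * r < dist a b) (hSP : S ⊆ P) {e : ℝ} (he : e ∈ P)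
    (hxe : dist x e < r) : x ∈ thickening r (convexHull ℝ S) ↔ e ∈ convexHull ℝ S := by
  refine ⟨fun hx => ?_, fun he' => mem_thickening_iff.2 ⟨e, he', hxe⟩⟩
  obtain ⟨y, hy, hxy⟩ := mem_thickening_iff.1 hx
  exact mem_convexHull_of_dist_le hsep hSP he hy hxe.le hxy.le

theorem mem_thickening_convexHull_iff_of_forall_le_dist (hr : 0 < r)
    (hfar : ∀ e ∈ S, r ≤ dist x e) :
    x ∈ thickening r (convexHull ℝ S) ↔ x ∈ convexHull ℝ S := by
  refine ⟨fun hx => ?_, fun hx => mem_thickening_iff.2 ⟨x, hx, by simpa using hr⟩⟩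
  by_contra hx'
  obtain ⟨y, hy, hxy⟩ := mem_thickening_iff.1 hx
  obtain ⟨e, he, hxe⟩ := exists_dist_le_of_notMem_convexHull hx' hy
  exact (hfar e he).not_gt (hxe.trans_lt hxy)

theorem mem_cthickening_convexHull_iff (hS : S.Finite) (hr : 0 ≤ r) :
    x ∈ cthickening r (convexHull ℝ S) ↔ ∃ y ∈ convexHull ℝ S, dist x y ≤ r := by
  rw [(hS.isCompact_convexHull (𝕜 := ℝ)).cthickening_eq_biUnion_closedBall hr]
  simp only [mem_iUnion₂, mem_closedBall, exists_prop]

theorem mem_cthickening_convexHull_iff_of_dist_le (hS : S.Finite) (hr : 0 ≤ r)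
    (hsep : P.Pairwise fun a b => 2 * r < dist a b) (hSP : S ⊆ P) {e : ℝ} (he : e ∈ P)
    (hxe : dist x e ≤ r) : x ∈ cthickening r (convexHull ℝ S) ↔ e ∈ convexHull ℝ S := by
  rw [mem_cthickening_convexHull_iff hS hr]
  exact ⟨fun ⟨y, hy, hxy⟩ => mem_convexHull_of_dist_le hsep hSP he hy hxe hxy,
    fun he' => ⟨e, he', hxe⟩⟩

theorem mem_cthickening_convexHull_iff_of_forall_lt_dist (hS : S.Finite) (hr : 0 ≤ r)
    (hfar : ∀ e ∈ S, r < dist x e) :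
    x ∈ cthickening r (convexHull ℝ S) ↔ x ∈ convexHull ℝ S := by
  rw [mem_cthickening_convexHull_iff hS hr]
  refine ⟨fun ⟨y, hy, hxy⟩ => ?_, fun hx => ⟨x, hx, by simpa using hr⟩⟩
  by_contra hx'
  obtain ⟨e, he, hxe⟩ := exists_dist_le_of_notMem_convexHull hx' hy
  exact (hfar e he).not_ge (hxe.trans hxy)

end Thickening

section ThickeningFamily

variable {n : ℕ} {P : Set ℝ} {r : ℝ} {S : Fin n → Set ℝ}

theorem range_pattern_thickening_convexHull (hr : 0 < r)
    (hsep : P.Pairwise fun a b => 2 * r < dist a b) (hSP : ∀ i, S i ⊆ P)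
    (hP : ∀ x, ∃ e ∈ P, pattern (fun i => convexHull ℝ (S i)) e =
      pattern (fun i => convexHull ℝ (S i)) x) :
    range (pattern fun i => thickening r (convexHull ℝ (S i))) =
      range (pattern fun i => convexHull ℝ (S i)) := by
  refine Subset.antisymm ?_ ?_
  · rintro _ ⟨x, rfl⟩
    by_cases hnear : ∃ e ∈ P, dist x e < r
    · obtain ⟨e, he, hxe⟩ := hnear
      exact ⟨e, (pattern_eq_pattern_iff.2 fun i =>
        mem_thickening_convexHull_iff_of_dist_lt hsep (hSP i) he hxe).symm⟩
    · push Not at hnear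
      exact ⟨x, (pattern_eq_pattern_iff.2 fun i =>
        mem_thickening_convexHull_iff_of_forall_le_dist hr fun e he => hnear e (hSP i he)).symm⟩
  · rintro _ ⟨x, rfl⟩
    obtain ⟨e, he, hex⟩ := hP x
    exact ⟨e, (pattern_eq_pattern_iff.2 fun i => mem_thickening_convexHull_iff_of_dist_lt hsep
      (hSP i) he (by simpa using hr)).trans hex⟩

theorem range_pattern_cthickening_convexHull (hPfin : P.Finite) (hr : 0 ≤ r)
    (hsep : P.Pairwise fun a b => 2 * r < dist a b) (hSP : ∀ i, S i ⊆ P)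
    (hP : ∀ x, ∃ e ∈ P, pattern (fun i => convexHull ℝ (S i)) e =
      pattern (fun i => convexHull ℝ (S i)) x) :
    range (pattern fun i => cthickening r (convexHull ℝ (S i))) =
      range (pattern fun i => convexHull ℝ (S i)) := by
  refine Subset.antisymm ?_ ?_
  · rintro _ ⟨x, rfl⟩
    by_cases hnear : ∃ e ∈ P, dist x e ≤ r
    · obtain ⟨e, he, hxe⟩ := hnear
      exact ⟨e, (pattern_eq_pattern_iff.2 fun i => mem_cthickening_convexHull_iff_of_dist_le
        (hPfin.subset (hSP i)) hr hsep (hSP i) he hxe).symm⟩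
    · push Not at hnear
      exact ⟨x, (pattern_eq_pattern_iff.2 fun i =>
        mem_cthickening_convexHull_iff_of_forall_lt_dist (hPfin.subset (hSP i)) hr
          fun e he => hnear e (hSP i he)).symm⟩
  · rintro _ ⟨x, rfl⟩
    obtain ⟨e, he, hex⟩ := hP x
    exact ⟨e, (pattern_eq_pattern_iff.2 fun i => mem_cthickening_convexHull_iff_of_dist_le
      (hPfin.subset (hSP i)) hr hsep (hSP i) he (by simpa using hr)).trans hex⟩

end ThickeningFamily

theorem exists_convex_isOpen_range_pattern_eq {n : ℕ} {U : Fin n → Set ℝ}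
    (hU : ∀ i, (U i).OrdConnected) (htop : (∀ i, IsOpen (U i)) ∨ (∀ i, IsClosed (U i)))
    (hempty : ∅ ∈ range (pattern U)) :
    ∃ V : Fin n → Set ℝ, (∀ i, Convex ℝ (V i)) ∧ (∀ i, IsOpen (V i)) ∧
      range (pattern V) = range (pattern U) ∧
      range (pattern fun i => closure (V i)) = range (pattern U) := by
  classical
  obtain ⟨P, hP⟩ : ∃ P : Finset ℝ, ∀ y, ∃ q ∈ P, pattern U q = pattern U y :=
    ⟨Finset.univ.image (Function.invFun (pattern U)), fun y =>
      ⟨_, Finset.mem_image_of_mem _ (Finset.mem_univ _), Function.invFun_eq ⟨y, rfl⟩⟩⟩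
  obtain ⟨δ, hδ, hsep⟩ := P.finite_toSet.exists_pos_pairwise_lt_dist
  have hsep' : (P : Set ℝ).Pairwise fun a b => 2 * (δ / 2) < dist a b :=
    hsep.mono' fun a b h => by linarith
  set X := fun i => convexHull ℝ (↑P ∩ U i)
  have hX : range (pattern X) = range (pattern U) :=
    range_pattern_convexHull_inter hU htop hP hempty
  have hXP : ∀ x, ∃ e ∈ (P : Set ℝ), pattern X e = pattern X x := by
    intro x
    obtain ⟨y, hy⟩ := hX.subset ⟨x, rfl⟩
    obtain ⟨q, hq, hqy⟩ := hP y
    exact ⟨q, hq, ((pattern_convexHull_inter_of_mem hU hq).trans hqy).trans hy⟩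
  refine ⟨fun i => thickening (δ / 2) (X i), fun i => (convex_convexHull ℝ _).thickening _,
    fun i => isOpen_thickening, ?_, ?_⟩
  · rw [range_pattern_thickening_convexHull (half_pos hδ) hsep' (fun i => inter_subset_left) hXP,
      hX]
  · simp only [closure_thickening (half_pos hδ)]
    rw [range_pattern_cthickening_convexHull P.finite_toSet (half_pos hδ).le hsep'
      (fun i => inter_subset_left) hXP, hX]

theorem ENat.sInf_setOf_natCast_eq_one_iff (Q : ℕ → Prop) :
    sInf {e : ℕ∞ | ∃ d : ℕ, e = d ∧ Q d} = 1 ↔ Q 1 ∧ ¬ Q 0 := by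
  constructor
  · intro h
    have h0 : ¬ Q 0 := fun hQ0 => by
      simpa [h] using (sInf_le ⟨0, rfl, hQ0⟩ : sInf {e : ℕ∞ | ∃ d : ℕ, e = d ∧ Q d} ≤ (0 : ℕ))
    refine ⟨by_contra fun h1 => ?_, h0⟩
    have h2 : ((2 : ℕ) : ℕ∞) ≤ sInf {e : ℕ∞ | ∃ d : ℕ, e = d ∧ Q d} := by
      refine le_sInf ?_
      rintro _ ⟨d, rfl, hd⟩
      have : d ≠ 0 := by rintro rfl; exact h0 hd
      have : d ≠ 1 := by rintro rfl; exact h1 hd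
      exact_mod_cast (by omega : 2 ≤ d)
    rw [h] at h2
    norm_num at h2
  · rintro ⟨h1, h0⟩
    refine le_antisymm (sInf_le ⟨1, by simp, h1⟩) (le_sInf ?_)
    rintro _ ⟨d, rfl, hd⟩
    have : d ≠ 0 := by rintro rfl; exact h0 hd
    exact_mod_cast Nat.one_le_iff_ne_zero.2 this

section Realizations

variable {n : ℕ} {C : Set (Finset (Fin n))}

def eucOneEquivReal : Euc 1 ≃L[ℝ] ℝ :=
  (EuclideanSpace.equiv (Fin 1) ℝ).trans (ContinuousLinearEquiv.funUnique (Fin 1) ℝ ℝ)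

theorem exists_ordConnected_range_pattern_eq (h : HasOpenReal C 1 ∨ HasClosedReal C 1) :
    ∃ U : Fin n → Set ℝ, (∀ i, (U i).OrdConnected) ∧
      ((∀ i, IsOpen (U i)) ∨ (∀ i, IsClosed (U i))) ∧ range (pattern U) = C := by
  obtain ⟨U, hconv, htop, hcode⟩ : ∃ U : Fin n → Set (Euc 1), (∀ i, Convex ℝ (U i)) ∧
      ((∀ i, IsOpen (U i)) ∨ (∀ i, IsClosed (U i))) ∧ codeOf U = C := by
    rcases h with ⟨U, hconv, hopen, hcode⟩ | ⟨U, hconv, hclosed, hcode⟩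
    exacts [⟨U, hconv, .inl hopen, hcode⟩, ⟨U, hconv, .inr hclosed, hcode⟩]
  set e := eucOneEquivReal.symm
  refine ⟨fun i => e ⁻¹' U i, fun i => ((hconv i).linear_preimage e.toLinearMap).ordConnected,
    htop.imp (fun h i => (h i).preimage e.continuous) (fun h i => (h i).preimage e.continuous), ?_⟩
  rw [← hcode, codeOf_eq_range_pattern]
  exact range_pattern_preimage e.toEquiv U

theorem exists_isNondegOpenReal_one (hC : ∅ ∈ C) (h : HasOpenReal C 1 ∨ HasClosedReal C 1) :
    ∃ U : Fin n → Set (Euc 1), IsNondegOpenReal C U := by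
  obtain ⟨U, hU, htop, hcode⟩ := exists_ordConnected_range_pattern_eq h
  obtain ⟨V, hconv, hopen, hV, hclV⟩ := exists_convex_isOpen_range_pattern_eq hU htop (hcode ▸ hC)
  set e := eucOneEquivReal
  refine ⟨fun i => e ⁻¹' V i, ⟨fun i => (hconv i).linear_preimage e.toLinearMap,
    fun i => (hopen i).preimage e.continuous, ?_⟩, ?_⟩
  · rw [codeOf_eq_range_pattern, ← hcode, ← hV]
    exact range_pattern_preimage e.toEquiv V
  · simp only [← e.preimage_closure]
    rw [codeOf_eq_range_pattern, ← hcode, ← hclV]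
    exact range_pattern_preimage e.toEquiv _

theorem exists_isNondegOpenReal_zero (h : HasOpenReal C 0 ∨ HasClosedReal C 0) :
    ∃ U : Fin n → Set (Euc 0), IsNondegOpenReal C U := by
  rcases h with ⟨U, hconv, -, hcode⟩ | ⟨U, hconv, -, hcode⟩ <;>
    exact ⟨U, ⟨hconv, fun i => isOpen_discrete _, hcode⟩, by simpa only [closure_discrete]⟩

theorem IsNondegOpenReal.hasClosedReal {d : ℕ} {U : Fin n → Set (Euc d)}
    (h : IsNondegOpenReal C U) : HasClosedReal C d :=
  ⟨fun i => closure (U i), fun i => (h.1.1 i).closure, fun _ => isClosed_closure, h.2⟩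

theorem HasNondegReal.hasClosedReal {d : ℕ} (h : HasNondegReal C d) : HasClosedReal C d :=
  h.elim (fun ⟨_, hU⟩ => hU.hasClosedReal) fun ⟨X, hX⟩ => ⟨X, hX.1⟩

theorem hasOpenReal_iff_hasClosedReal_of_imp {d : ℕ}
    (h : HasOpenReal C d ∨ HasClosedReal C d → ∃ U : Fin n → Set (Euc d), IsNondegOpenReal C U) :
    HasOpenReal C d ↔ HasClosedReal C d :=
  ⟨fun ho => (h (.inl ho)).elim fun _ hU => hU.hasClosedReal,
    fun hc => (h (.inr hc)).elim fun U hU => ⟨U, hU.1⟩⟩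

theorem hasClosedReal_iff_hasNondegReal_of_imp {d : ℕ}
    (h : HasClosedReal C d → ∃ U : Fin n → Set (Euc d), IsNondegOpenReal C U) :
    HasClosedReal C d ↔ HasNondegReal C d :=
  ⟨fun hc => .inl (h hc), HasNondegReal.hasClosedReal⟩

end Realizations

/-- For any code, having an open, closed, or non-degenerate convex realization in `ℝ^1`
are all equivalent; in particular `odim C = 1 ↔ cdim C = 1 ↔ nddim C = 1`. -/
theorem dim_one_equivalences {n : ℕ} (C : Set (Finset (Fin n))) (hC : ∅ ∈ C) :
    (HasOpenReal C 1 ↔ HasClosedReal C 1) ∧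
    (HasClosedReal C 1 ↔ HasNondegReal C 1) ∧
    (odim C = 1 ↔ cdim C = 1) ∧
    (cdim C = 1 ↔ nddim C = 1) := by
  have hoc₁ := hasOpenReal_iff_hasClosedReal_of_imp (exists_isNondegOpenReal_one hC)
  have hcn₁ := hasClosedReal_iff_hasNondegReal_of_imp fun h =>
    exists_isNondegOpenReal_one hC (.inr h)
  have hoc₀ := hasOpenReal_iff_hasClosedReal_of_imp (C := C) exists_isNondegOpenReal_zero
  have hcn₀ := hasClosedReal_iff_hasNondegReal_of_imp (C := C) fun h =>
    exists_isNondegOpenReal_zero (.inr h)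
  simp only [odim, cdim, nddim, ENat.sInf_setOf_natCast_eq_one_iff]
  exact ⟨hoc₁, hcn₁, and_congr hoc₁ (not_congr hoc₀), and_congr hcn₁ (not_congr hcn₀)⟩

end
end

section
/- Let C be a code on n neurons and D a code on m neurons, and let C ⊔ D be the code on n + m neurons whose codewords are the codewords of C (on the first n indices) together with the codewords of D (shifted to the last m indices). Then for every d ≥ 1, C ⊔ D has an open convex realization in ℝ^d if and only if both C and D have open convex realizations in ℝ^d. Consequently odim(C ⊔ D) = max{odim(C), odim(D)}. -/
/-!
Restricting a realization of `C ⊔ D` to the first `n` (last `m`) sets realizes `C` (`D`):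
a point whose codeword lies in the other summand now sees the empty codeword, which `C`
(`D`) contains. Conversely, since `∅` is a codeword, realizations of `C` and `D` can be cut
down to a ball without changing their codes; translating the one of `D` into a disjoint
ball leaves room for a point outside all sets, and the juxtaposed family realizes `C ⊔ D`
(in `ℝ^0` all sets are empty and nothing needs to be moved). Realizability is monotone in
the dimension (pull back along a coordinate projection), which gives the formula for `odim`.
-/

open Set

noncomputable section

/-- Embedding of `Fin n` into the first `n` indices of `Fin (n + m)`. -/
def finLeftEmb (n m : ℕ) : Fin n ↪ Fin (n + m) :=
  ⟨fun i => ⟨i.1, Nat.lt_of_lt_of_le i.2 (Nat.le_add_right n m)⟩,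
    fun a b h => by apply Fin.ext; simpa using congrArg Fin.val h⟩

/-- Embedding of `Fin m` into the last `m` indices of `Fin (n + m)`. -/
def finRightEmb (n m : ℕ) : Fin m ↪ Fin (n + m) :=
  ⟨fun i => ⟨n + i.1, Nat.add_lt_add_left i.2 n⟩,
    fun a b h => by apply Fin.ext; have := congrArg Fin.val h; simpa using this⟩

/-- The disjoint union `C ⊔ D` of a code on `n` neurons (on the first `n` indices)
and a code on `m` neurons (shifted to the last `m` indices). -/
def codeSum {n m : ℕ} (C : Set (Finset (Fin n))) (D : Set (Finset (Fin m))) :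
    Set (Finset (Fin (n + m))) :=
  {τ | ∃ σ ∈ C, τ = σ.map (finLeftEmb n m)} ∪ {τ | ∃ σ ∈ D, τ = σ.map (finRightEmb n m)}

section

open Metric

variable {n m d : ℕ}

theorem finLeftEmb_eq : finLeftEmb n m = Fin.castAddEmb m := by
  ext; rfl

theorem finRightEmb_eq : finRightEmb n m = Fin.natAddEmb n := by
  ext; rfl

theorem codeSum_eq (C : Set (Finset (Fin n))) (D : Set (Finset (Fin m))) :
    codeSum C D = Finset.map (Fin.castAddEmb m) '' C ∪ Finset.map (Fin.natAddEmb n) '' D := by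
  simp only [codeSum, finLeftEmb_eq, finRightEmb_eq, Set.image, eq_comm]

open Classical in
def codeword (U : Fin n → Set (Euc d)) (p : Euc d) : Finset (Fin n) :=
  Finset.univ.filter (p ∈ U ·)

@[simp]
theorem mem_codeword {U : Fin n → Set (Euc d)} {p : Euc d} {i : Fin n} :
    i ∈ codeword U p ↔ p ∈ U i := by
  simp [codeword]

theorem codeword_eq_empty {U : Fin n → Set (Euc d)} {p : Euc d} :
    codeword U p = ∅ ↔ ∀ i, p ∉ U i := by
  simp [Finset.eq_empty_iff_forall_notMem]

theorem codeOf_eq_range (U : Fin n → Set (Euc d)) : codeOf U = Set.range (codeword U) := by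
  ext σ
  simp only [codeOf, Set.mem_range, Finset.ext_iff, mem_codeword]
  rfl

theorem codeOf_preimage_of_surjective {d' : ℕ} (U : Fin n → Set (Euc d))
    {f : Euc d' → Euc d} (hf : Function.Surjective f) :
    codeOf (fun i => f ⁻¹' U i) = codeOf U := by
  simp only [codeOf_eq_range, ← hf.range_comp (codeword U)]
  rfl

theorem codeOf_comp {N : ℕ} (W : Fin N → Set (Euc d)) (e : Fin n → Fin N) :
    codeOf (fun i => W (e i)) = (fun τ => Finset.univ.filter (e · ∈ τ)) '' codeOf W := by
  rw [codeOf_eq_range, codeOf_eq_range, ← Set.range_comp]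
  congr 1
  ext p i
  simp

theorem Fin.castAdd_ne_natAdd (i : Fin n) (j : Fin m) : Fin.castAdd m i ≠ Fin.natAdd n j := by
  rw [Ne, Fin.ext_iff]
  simp only [Fin.val_castAdd, Fin.val_natAdd]
  omega

theorem Fin.natAdd_ne_castAdd (i : Fin n) (j : Fin m) : Fin.natAdd n j ≠ Fin.castAdd m i :=
  (Fin.castAdd_ne_natAdd i j).symm

theorem codeword_append (U : Fin n → Set (Euc d)) (V : Fin m → Set (Euc d)) (p : Euc d) :
    codeword (Fin.append U V) p =
      (codeword U p).map (Fin.castAddEmb m) ∪ (codeword V p).map (Fin.natAddEmb n) := by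
  ext k
  induction k using Fin.addCases <;> simp [Fin.castAdd_ne_natAdd, Fin.natAdd_ne_castAdd]

theorem range_map_union_map {X : Type*} (f : X → Finset (Fin n)) (g : X → Finset (Fin m))
    (hfg : ∀ p, f p = ∅ ∨ g p = ∅) {q : X} (hq : f q = ∅ ∧ g q = ∅) :
    Set.range (fun p => (f p).map (Fin.castAddEmb m) ∪ (g p).map (Fin.natAddEmb n)) =
      Finset.map (Fin.castAddEmb m) '' Set.range f ∪
        Finset.map (Fin.natAddEmb n) '' Set.range g := by
  ext τ
  constructor
  · rintro ⟨p, rfl⟩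
    rcases hfg p with h | h
    · exact Or.inr ⟨g p, ⟨p, rfl⟩, by simp [h]⟩
    · exact Or.inl ⟨f p, ⟨p, rfl⟩, by simp [h]⟩
  · rintro (⟨_, ⟨p, rfl⟩, rfl⟩ | ⟨_, ⟨p, rfl⟩, rfl⟩) <;> rcases hfg p with h | h
    · exact ⟨q, by simp [h, hq]⟩
    · exact ⟨p, by simp [h]⟩
    · exact ⟨p, by simp [h]⟩
    · exact ⟨q, by simp [h, hq]⟩

theorem codeOf_append {U : Fin n → Set (Euc d)} {V : Fin m → Set (Euc d)}
    (hUV : ∀ i j, Disjoint (U i) (V j)) {q : Euc d} (hqU : ∀ i, q ∉ U i)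
    (hqV : ∀ j, q ∉ V j) :
    codeOf (Fin.append U V) = codeSum (codeOf U) (codeOf V) := by
  have hUV' : ∀ p, codeword U p = ∅ ∨ codeword V p = ∅ := by
    intro p
    by_contra! h
    obtain ⟨i, hi⟩ := h.1
    obtain ⟨j, hj⟩ := h.2
    exact Set.disjoint_left.mp (hUV i j) (mem_codeword.mp hi) (mem_codeword.mp hj)
  rw [codeSum_eq, codeOf_eq_range, codeOf_eq_range, codeOf_eq_range, funext (codeword_append U V)]
  exact range_map_union_map _ _ hUV' ⟨codeword_eq_empty.mpr hqU, codeword_eq_empty.mpr hqV⟩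

theorem image_filter_castAdd_codeSum {C : Set (Finset (Fin n))} (D : Set (Finset (Fin m)))
    (hC : ∅ ∈ C) :
    (fun τ => Finset.univ.filter (Fin.castAdd m · ∈ τ)) '' codeSum C D = C := by
  rw [codeSum_eq, Set.image_union, Set.image_image, Set.image_image]
  simp only [Finset.mem_map, Fin.coe_castAddEmb, Fin.castAdd_inj, exists_eq_right,
    Finset.subset_univ, Finset.filter_mem_eq_of_subset, Set.image_id', Fin.natAddEmb_apply,
    Fin.natAdd_ne_castAdd, and_false, exists_false, Finset.filter_false, Set.union_eq_left,
    Set.image_subset_iff]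
  exact fun _ _ => hC

theorem image_filter_natAdd_codeSum (C : Set (Finset (Fin n))) {D : Set (Finset (Fin m))}
    (hD : ∅ ∈ D) :
    (fun τ => Finset.univ.filter (Fin.natAdd n · ∈ τ)) '' codeSum C D = D := by
  rw [codeSum_eq, Set.image_union, Set.image_image, Set.image_image]
  simp only [Finset.mem_map, Fin.coe_castAddEmb, Fin.castAdd_ne_natAdd, and_false, exists_false,
    Finset.filter_false, Fin.natAddEmb_apply, Fin.natAdd_inj, exists_eq_right,
    Finset.subset_univ, Finset.filter_mem_eq_of_subset, Set.image_id', Set.union_eq_right,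
    Set.image_subset_iff]
  exact fun _ _ => hD

theorem HasOpenReal.of_codeSum_left {C : Set (Finset (Fin n))} {D : Set (Finset (Fin m))}
    (hC : ∅ ∈ C) (h : HasOpenReal (codeSum C D) d) : HasOpenReal C d := by
  obtain ⟨W, hconv, hopen, hcode⟩ := h
  exact ⟨fun i => W (Fin.castAdd m i), fun _ => hconv _, fun _ => hopen _,
    by rw [codeOf_comp, hcode, image_filter_castAdd_codeSum D hC]⟩

theorem HasOpenReal.of_codeSum_right {C : Set (Finset (Fin n))} {D : Set (Finset (Fin m))}
    (hD : ∅ ∈ D) (h : HasOpenReal (codeSum C D) d) : HasOpenReal D d := by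
  obtain ⟨W, hconv, hopen, hcode⟩ := h
  exact ⟨fun j => W (Fin.natAdd n j), fun _ => hconv _, fun _ => hopen _,
    by rw [codeOf_comp, hcode, image_filter_natAdd_codeSum C hD]⟩

theorem IsOpenReal.append {C : Set (Finset (Fin n))} {D : Set (Finset (Fin m))}
    {U : Fin n → Set (Euc d)} {V : Fin m → Set (Euc d)} (hU : IsOpenReal C U)
    (hV : IsOpenReal D V) (hUV : ∀ i j, Disjoint (U i) (V j)) {q : Euc d}
    (hqU : ∀ i, q ∉ U i) (hqV : ∀ j, q ∉ V j) :
    IsOpenReal (codeSum C D) (Fin.append U V) := by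
  refine ⟨Fin.addCases (by simpa using hU.1) (by simpa using hV.1),
    Fin.addCases (by simpa using hU.2.1) (by simpa using hV.2.1), ?_⟩
  rw [codeOf_append hUV hqU hqV, hU.2.2, hV.2.2]

theorem IsOpenReal.preimage {d' : ℕ} {C : Set (Finset (Fin n))} {U : Fin n → Set (Euc d)}
    (hU : IsOpenReal C U) (f : Euc d' →ᵃ[ℝ] Euc d) (hf : Function.Surjective f) :
    IsOpenReal C (fun i => f ⁻¹' U i) :=
  ⟨fun i => (hU.1 i).affine_preimage f,
    fun i => (hU.2.1 i).preimage f.continuous_of_finiteDimensional,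
    (codeOf_preimage_of_surjective U hf).trans hU.2.2⟩

theorem hasOpenReal_mono (C : Set (Finset (Fin n))) : Monotone (HasOpenReal C) := by
  intro d d' hdd' ⟨U, hU⟩
  let e := WithLp.linearEquiv 2 ℝ
  let π : Euc d' →ₗ[ℝ] Euc d := (e (Fin d → ℝ)).symm.toLinearMap ∘ₗ
    LinearMap.funLeft ℝ ℝ (Fin.castLE hdd') ∘ₗ (e (Fin d' → ℝ)).toLinearMap
  have hπ : Function.Surjective π := (e _).symm.surjective.comp <|
    (LinearMap.funLeft_surjective_of_injective ℝ ℝ _ (Fin.castLE_injective hdd')).comp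
      (e _).surjective
  exact ⟨_, IsOpenReal.preimage hU π.toAffineMap hπ⟩

theorem eventually_forall_codeOf_exists_mem_ball (U : Fin n → Set (Euc d)) :
    ∀ᶠ R in Filter.atTop,
      ∀ σ ∈ codeOf U, ∃ p ∈ ball (0 : Euc d) R, codeword U p = σ := by
  have hwit : ∀ σ : codeOf U, ∃ p, codeword U p = σ := fun σ => by
    simpa [codeOf_eq_range] using σ.2
  choose g hg using hwit
  obtain ⟨r, hr⟩ := (Set.finite_range g).isBounded.subset_ball 0
  filter_upwards [Filter.eventually_ge_atTop r] with R hR σ hσ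
  exact ⟨g ⟨σ, hσ⟩, ball_subset_ball hR (hr ⟨_, rfl⟩), hg _⟩

theorem codeOf_inter {U : Fin n → Set (Euc d)} {S : Set (Euc d)} (h0 : ∅ ∈ codeOf U)
    (hS : ∀ σ ∈ codeOf U, ∃ p ∈ S, codeword U p = σ) :
    codeOf (fun i => U i ∩ S) = codeOf U := by
  have hin : ∀ p ∈ S, codeword (fun i => U i ∩ S) p = codeword U p := fun p hp => by
    ext i; simp [hp]
  have hout : ∀ p ∉ S, codeword (fun i => U i ∩ S) p = ∅ := fun p hp =>
    codeword_eq_empty.mpr fun i h => hp h.2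
  ext σ
  refine ⟨fun hσ => ?_, fun hσ => ?_⟩
  · obtain ⟨p, rfl⟩ := (codeOf_eq_range _).subset hσ
    by_cases hp : p ∈ S
    · exact (hin p hp).symm ▸ (codeOf_eq_range U).superset ⟨p, rfl⟩
    · exact (hout p hp).symm ▸ h0
  · obtain ⟨p, hp, rfl⟩ := hS σ hσ
    exact (codeOf_eq_range _).superset ⟨p, hin p hp⟩

theorem IsOpenReal.inter_ball {C : Set (Finset (Fin n))} {U : Fin n → Set (Euc d)} {R : ℝ}
    (hU : IsOpenReal C U) (hC : ∅ ∈ C)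
    (hR : ∀ σ ∈ C, ∃ p ∈ ball (0 : Euc d) R, codeword U p = σ) :
    IsOpenReal C (fun i => U i ∩ ball 0 R) := by
  obtain ⟨hconv, hopen, rfl⟩ := hU
  exact ⟨fun i => (hconv i).inter (convex_ball _ _), fun i => (hopen i).inter isOpen_ball,
    codeOf_inter hC hR⟩

theorem eq_empty_of_empty_mem_codeOf {U : Fin n → Set (Euc 0)} (h : ∅ ∈ codeOf U)
    (i : Fin n) :
    U i = ∅ := by
  obtain ⟨p, hp⟩ := h
  exact Set.eq_empty_of_forall_notMem fun x hx =>
    Finset.notMem_empty i ((hp i).mp (Subsingleton.elim x p ▸ hx))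

theorem hasOpenReal_codeSum_zero {C : Set (Finset (Fin n))} {D : Set (Finset (Fin m))}
    (hC : ∅ ∈ C) (hD : ∅ ∈ D) (hC0 : HasOpenReal C 0) (hD0 : HasOpenReal D 0) :
    HasOpenReal (codeSum C D) 0 := by
  obtain ⟨U, hU⟩ := hC0
  obtain ⟨V, hV⟩ := hD0
  have hU0 := eq_empty_of_empty_mem_codeOf (hU.2.2 ▸ hC)
  have hV0 := eq_empty_of_empty_mem_codeOf (hV.2.2 ▸ hD)
  exact ⟨_, hU.append hV (fun i j => by simp [hU0]) (q := 0) (by simp [hU0]) (by simp [hV0])⟩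

theorem hasOpenReal_codeSum_of_pos {C : Set (Finset (Fin n))} {D : Set (Finset (Fin m))}
    (hd : 0 < d) (hC : ∅ ∈ C) (hD : ∅ ∈ D) (hCd : HasOpenReal C d) (hDd : HasOpenReal D d) :
    HasOpenReal (codeSum C D) d := by
  obtain ⟨U, hU⟩ := hCd
  obtain ⟨V, hV⟩ := hDd
  obtain ⟨R, hRU, hRV, hR⟩ := ((eventually_forall_codeOf_exists_mem_ball U).and
    ((eventually_forall_codeOf_exists_mem_ball V).and (Filter.eventually_gt_atTop 0))).exists
  rw [hU.2.2] at hRU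
  rw [hV.2.2] at hRV
  -- `C` is realized inside `ball 0 R`, and `D` inside `ball t R`, with `-t` outside both
  set t : Euc d := EuclideanSpace.single ⟨0, hd⟩ (2 * R)
  have ht : ‖t‖ = 2 * R := by
    rw [PiLp.norm_single, Real.norm_eq_abs, abs_of_pos (by positivity)]
  let τ : Euc d ≃ᵃ[ℝ] Euc d := AffineEquiv.constVAdd ℝ (Euc d) (-t)
  have hτ : ∀ x, τ x ∈ ball (0 : Euc d) R ↔ x ∈ ball t R := fun x => by
    simp [τ, dist_eq_norm, neg_add_eq_sub]
  refine ⟨_, (hU.inter_ball hC hRU).append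
    ((hV.inter_ball hD hRV).preimage τ.toAffineMap τ.surjective) (q := -t) ?_ ?_ ?_⟩
  · refine fun i j => (ball_disjoint_ball ?_).mono Set.inter_subset_right
      fun x hx => (hτ x).mp hx.2
    rw [dist_zero_left, ht]
    linarith
  · intro i h
    have := mem_ball_zero_iff.mp h.2
    rw [norm_neg, ht] at this
    linarith
  · intro j h
    have := (hτ _).mp h.2
    rw [mem_ball, dist_eq_norm, ← neg_add', norm_neg, ← two_smul ℝ, norm_smul, ht] at this
    norm_num at this
    linarith

theorem hasOpenReal_codeSum {C : Set (Finset (Fin n))} {D : Set (Finset (Fin m))}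
    (hC : ∅ ∈ C) (hD : ∅ ∈ D) (hCd : HasOpenReal C d) (hDd : HasOpenReal D d) :
    HasOpenReal (codeSum C D) d := by
  rcases d.eq_zero_or_pos with rfl | hd
  · exact hasOpenReal_codeSum_zero hC hD hCd hDd
  · exact hasOpenReal_codeSum_of_pos hd hC hD hCd hDd

end

theorem ENat.sInf_setOf_natCast_and {P Q : ℕ → Prop} (hP : Monotone P) (hQ : Monotone Q) :
    sInf {e : ℕ∞ | ∃ d : ℕ, e = d ∧ P d ∧ Q d} =
      max (sInf {e : ℕ∞ | ∃ d : ℕ, e = d ∧ P d})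
        (sInf {e : ℕ∞ | ∃ d : ℕ, e = d ∧ Q d}) := by
  refine le_antisymm ?_ (max_le (sInf_le_sInf fun e ⟨d, he, hd, _⟩ => ⟨d, he, hd⟩)
    (sInf_le_sInf fun e ⟨d, he, _, hd⟩ => ⟨d, he, hd⟩))
  obtain hPe | hPne := Set.eq_empty_or_nonempty {e : ℕ∞ | ∃ d : ℕ, e = d ∧ P d}
  · simp [hPe]
  obtain hQe | hQne := Set.eq_empty_or_nonempty {e : ℕ∞ | ∃ d : ℕ, e = d ∧ Q d}
  · simp [hQe]
  obtain ⟨d₁, h₁, hP₁⟩ := csInf_mem hPne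
  obtain ⟨d₂, h₂, hQ₂⟩ := csInf_mem hQne
  rw [h₁, h₂, ← Nat.mono_cast.map_max]
  exact sInf_le ⟨_, rfl, hP (le_max_left _ _) hP₁, hQ (le_max_right _ _) hQ₂⟩

/-- `C ⊔ D` has an open convex realization in `ℝ^d` iff both `C` and `D` do;
consequently `odim (C ⊔ D) = max (odim C) (odim D)`. -/
theorem codeSum_open {n m : ℕ} (C : Set (Finset (Fin n))) (D : Set (Finset (Fin m)))
    (hC : ∅ ∈ C) (hD : ∅ ∈ D) :
    (∀ d : ℕ, 1 ≤ d → (HasOpenReal (codeSum C D) d ↔ HasOpenReal C d ∧ HasOpenReal D d)) ∧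
    odim (codeSum C D) = max (odim C) (odim D) := by
  have hiff : ∀ d, HasOpenReal (codeSum C D) d ↔ HasOpenReal C d ∧ HasOpenReal D d :=
    fun d => ⟨fun h => ⟨h.of_codeSum_left hC, h.of_codeSum_right hD⟩,
      fun h => hasOpenReal_codeSum hC hD h.1 h.2⟩
  refine ⟨fun d _ => hiff d, ?_⟩
  simp only [odim, hiff]
  exact ENat.sInf_setOf_natCast_and (hasOpenReal_mono C) (hasOpenReal_mono D)

end
end

section
/- Let X = (X_1,…,X_n) be a collection of closed convex subsets of ℝ^d realizing a code C. Suppose the nonempty codewords of C can be enumerated c_1, c_2, …, c_k so that (i) c_1 ⊂ c_2 ⊃ c_3 ⊂ c_4 ⊃ ⋯ ⊂ c_{k−1} ⊃ c_k (alternating strict containments between consecutive codewords), (ii) no other containments occur between distinct nonempty codewords of C, and (iii) c_i ∩ c_{i+1} ∩ c_{i+2} ≠ ∅ for all i ∈ [k−2]. Then the union X_1 ∪ X_2 ∪ ⋯ ∪ X_n is a convex set. -/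
open Set

noncomputable section

/-! Let `ℓ z` be the position, in the enumeration `c`, of the codeword of a point `z` of
`U = ⋃ i, X i`. Closedness of the `X i` makes `ℓ` jump by at most one near any point of `U`;
convexity makes `ℓ` stay within one of `ℓ x` along a segment of `U` whose endpoints both have
level `ℓ x`; the triple condition gives points whose levels differ by at most three a common
neuron, hence a common convex set. These properties alone force `U` to be convex, by a
Tietze-type argument and induction on the gap `ℓ q - ℓ p`: among the points `z` of level about
`ℓ q` joined inside `U` to both `p` and `q`, take one minimising `dist z p + dist z q`. Unless
`z ∈ [p, q]`, sweeping segments from `q` across the triangle `p z q` towards `p`, and then from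
`p` back towards `q`, yields such a point with a smaller value: by induction the swept segments
stay in `U` until their moving end reaches a level that differs by the whole gap. -/

open Filter Topology

theorem IsPreconnected.exists_mem_closure_diff {α : Type*} [TopologicalSpace α] {s V : Set α}
    (hs : IsPreconnected s) (hV : IsClosed V) {b c : α} (hb : b ∈ s ∩ V) (hc : c ∈ s \ V) :
    ∃ r ∈ s ∩ V, r ∈ closure (s \ V) := by
  by_contra! hr
  have hcover : s ⊆ (closure (s \ V))ᶜ ∪ Vᶜ := fun r hrs =>
    (em (r ∈ V)).elim (fun hrV => Or.inl (hr r ⟨hrs, hrV⟩)) Or.inr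
  obtain ⟨r, hrs, hru, hrV⟩ := hs _ _ isClosed_closure.isOpen_compl hV.isOpen_compl hcover
    ⟨b, hb.1, hr b hb⟩ ⟨c, hc⟩
  exact hru (subset_closure ⟨hrs, hrV⟩)

section Segments

variable {E : Type*} [NormedAddCommGroup E] [NormedSpace ℝ E]

theorem isClosed_setOf_segment_subset {U : Set E} (hU : IsClosed U) (a : E) :
    IsClosed {z | segment ℝ a z ⊆ U} := by
  have : {z | segment ℝ a z ⊆ U} = ⋂ θ ∈ Icc (0 : ℝ) 1, (fun z => (1 - θ) • a + θ • z) ⁻¹' U := by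
    ext z
    simp only [mem_ofPred_eq, segment_eq_image, image_subset_iff, mem_iInter₂]
    rfl
  rw [this]
  exact isClosed_biInter fun θ _ => hU.preimage (by fun_prop)

theorem exists_segment_subset_mem_closure_diff {U : Set E} (hU : IsClosed U) {a b c : E}
    (hab : segment ℝ a b ⊆ U) (hac : ¬ segment ℝ a c ⊆ U) (G : Set E)
    (hG : ∀ r ∈ segment ℝ b c ∩ G, segment ℝ a r ⊆ U) :
    ∃ r ∈ segment ℝ b c, segment ℝ a r ⊆ U ∧ r ∈ closure (segment ℝ b c \ G) := by
  have hb : b ∈ segment ℝ b c ∩ {z | segment ℝ a z ⊆ U} := ⟨left_mem_segment ℝ b c, hab⟩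
  have hc : c ∈ segment ℝ b c \ {z | segment ℝ a z ⊆ U} := ⟨right_mem_segment ℝ b c, hac⟩
  obtain ⟨r, ⟨hr, har⟩, hcl⟩ := (convex_segment b c).isPreconnected.exists_mem_closure_diff
    (isClosed_setOf_segment_subset hU a) hb hc
  have hsub : segment ℝ b c \ {z | segment ℝ a z ⊆ U} ⊆ segment ℝ b c \ G :=
    fun w hw => ⟨hw.1, fun hwG => hw.2 (hG w ⟨hw.1, hwG⟩)⟩
  exact ⟨r, hr, har, closure_mono hsub hcl⟩

theorem segment_subset_union_of_mem {p q z : E} (hz : z ∈ segment ℝ p q) :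
    segment ℝ p q ⊆ segment ℝ p z ∪ segment ℝ z q := by
  intro w hw
  rw [mem_segment_iff_wbtw] at hz hw
  have hpwq := hw
  obtain ⟨t, ht, rfl⟩ := hz
  obtain ⟨s, hs, rfl⟩ := hw
  rcases wbtw_or_wbtw_smul_vadd_of_nonneg p (q -ᵥ p) hs.1 ht.1 with h | h
  · exact Or.inl (mem_segment_iff_wbtw.2 h)
  · exact Or.inr (mem_segment_iff_wbtw.2 (hpwq.trans_left_right h))

theorem dist_add_dist_lt_of_mem_segment {p q x y z : E} (hz : dist p q < dist z p + dist z q)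
    (hx : x ∈ segment ℝ z p) (hxz : x ≠ z) (hy : y ∈ segment ℝ x q) :
    dist y p + dist y q < dist z p + dist z q := by
  set f : E → ℝ := fun w => dist w p + dist w q
  have hf : ConvexOn ℝ univ f := (convexOn_dist p convex_univ).add (convexOn_dist q convex_univ)
  have hfp : f p < f z := by simpa [f] using hz
  have hfx : f x < f z := by
    rcases eq_or_ne x p with rfl | hxp
    · exact hfp
    by_contra! hzx
    have hx' := mem_openSegment_of_ne_left_right hxz.symm hxp.symm hx
    exact (hf.lt_left_of_right_lt trivial trivial hx' (hfp.trans_le hzx)).not_ge hzx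
  have hqx : f q ≤ f x := by
    simp only [f, dist_self, add_zero]
    linarith [dist_triangle_left q p x, dist_comm q p]
  calc f y ≤ max (f x) (f q) := hf.le_on_segment trivial trivial hy
    _ = f x := max_eq_left hqx
    _ < f z := hfx

end Segments

section Layering

variable {E : Type*} [NormedAddCommGroup E] [NormedSpace ℝ E] {U : Set E} {ℓ : E → ℕ}

structure IsLayering (U : Set E) (ℓ : E → ℕ) : Prop where
  isClosed : IsClosed U
  eventually_adj : ∀ z ∈ U, ∀ᶠ w in 𝓝 z, w ∈ U → ℓ w ≤ ℓ z + 1 ∧ ℓ z ≤ ℓ w + 1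
  adj_of_mem_segment : ∀ x ∈ U, ∀ y ∈ U, ℓ x = ℓ y → ∀ z ∈ segment ℝ x y, z ∈ U →
    ℓ z ≤ ℓ x + 1 ∧ ℓ x ≤ ℓ z + 1
  segment_subset : ∀ x ∈ U, ∀ y ∈ U, ℓ x ≤ ℓ y + 3 → ℓ y ≤ ℓ x + 3 → segment ℝ x y ⊆ U
  exists_pred : ∀ x ∈ U, 0 < ℓ x → ∃ y ∈ U, ℓ y + 1 = ℓ x

def ConvexBelowGap (U : Set E) (ℓ : E → ℕ) (Δ : ℕ) : Prop :=
  ∀ x ∈ U, ∀ y ∈ U, ℓ x < ℓ y + Δ → ℓ y < ℓ x + Δ → segment ℝ x y ⊆ U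

def levelBand (U : Set E) (ℓ : E → ℕ) (m : ℕ) : Set E :=
  {w ∈ U | m ≤ ℓ w + 1 ∧ ℓ w ≤ m + 1}

namespace IsLayering

theorem exists_adj_of_mem_closure (h : IsLayering U ℓ) {A : Set E} (hA : A ⊆ U) {z : E}
    (hz : z ∈ closure A) : ∃ w ∈ A, ℓ w ≤ ℓ z + 1 ∧ ℓ z ≤ ℓ w + 1 := by
  have hzU : z ∈ U := h.isClosed.closure_subset_iff.2 hA hz
  obtain ⟨w, hwA, hw⟩ :=
    ((mem_closure_iff_frequently.1 hz).and_eventually (h.eventually_adj z hzU)).exists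
  exact ⟨w, hwA, hw (hA hwA)⟩

theorem exists_level_eq (h : IsLayering U ℓ) {x y : E} (hxy : segment ℝ x y ⊆ U) {t : ℕ}
    (hxt : ℓ x ≤ t) (hty : t ≤ ℓ y) : ∃ z ∈ segment ℝ x y, ℓ z = t := by
  by_contra! hne
  set V := closure {w ∈ segment ℝ x y | ℓ w < t}
  have hV : ∀ r ∈ V, ℓ r ≤ t := fun r hr => by
    obtain ⟨w, ⟨-, hwt⟩, hadj⟩ := h.exists_adj_of_mem_closure (fun w hw => hxy hw.1) hr
    omega
  have hx : x ∈ segment ℝ x y ∩ V := ⟨left_mem_segment ℝ x y,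
    subset_closure ⟨left_mem_segment ℝ x y, hxt.lt_of_ne (hne x (left_mem_segment ℝ x y))⟩⟩
  have hy : y ∈ segment ℝ x y \ V := ⟨right_mem_segment ℝ x y,
    fun hy => hne y (right_mem_segment ℝ x y) (le_antisymm (hV y hy) hty)⟩
  obtain ⟨r, ⟨hr, hrV⟩, hcl⟩ :=
    (convex_segment x y).isPreconnected.exists_mem_closure_diff isClosed_closure hx hy
  obtain ⟨w, ⟨hw, hwV⟩, hadj⟩ := h.exists_adj_of_mem_closure (fun w hw => hxy hw.1) hcl
  have hwt : t ≤ ℓ w := not_lt.1 fun hwt => hwV (subset_closure ⟨hw, hwt⟩)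
  have := hV r hrV
  have := hne r hr
  have := hne w hw
  omega

theorem adj_of_level_between (h : IsLayering U ℓ) {x y z : E} (hxy : segment ℝ x y ⊆ U)
    (hz : z ∈ segment ℝ x y) (hbtw : ℓ x ≤ ℓ y ∧ ℓ y ≤ ℓ z ∨ ℓ z ≤ ℓ y ∧ ℓ y ≤ ℓ x) :
    ℓ z ≤ ℓ y + 1 ∧ ℓ y ≤ ℓ z + 1 := by
  have hxz : segment ℝ x z ⊆ U :=
    ((convex_segment x y).segment_subset (left_mem_segment ℝ x y) hz).trans hxy
  obtain ⟨w, hw, hwy⟩ : ∃ w ∈ segment ℝ x z, ℓ w = ℓ y := by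
    rcases hbtw with ⟨hxy', hyz⟩ | ⟨hzy, hyx⟩
    · exact h.exists_level_eq hxz hxy' hyz
    · rw [segment_symm] at hxz ⊢
      exact h.exists_level_eq hxz hzy hyx
  have hzwy : z ∈ segment ℝ w y := mem_segment_iff_wbtw.2
    ((mem_segment_iff_wbtw.1 hz).trans_left_right (mem_segment_iff_wbtw.1 hw))
  have := h.adj_of_mem_segment w (hxz hw) y (hxy (right_mem_segment ℝ x y)) hwy z hzwy (hxy hz)
  omega

theorem level_le_of_mem_segment (h : IsLayering U ℓ) {x y z : E} (hxy : segment ℝ x y ⊆ U)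
    (hz : z ∈ segment ℝ x y) : ℓ z ≤ max (ℓ x) (ℓ y) + 1 ∧ min (ℓ x) (ℓ y) ≤ ℓ z + 1 := by
  have hy := h.adj_of_level_between hxy hz
  rw [segment_symm] at hxy hz
  have hx := h.adj_of_level_between hxy hz
  omega

section Step

variable {Δ : ℕ}

theorem exists_sweep_stop (h : IsLayering U ℓ) (IH : ConvexBelowGap U ℓ Δ) {a b c : E} (ha : a ∈ U)
    (hab : segment ℝ a b ⊆ U) (hbc : segment ℝ b c ⊆ U) (hac : ¬ segment ℝ a c ⊆ U) :
    ∃ r ∈ segment ℝ b c, segment ℝ a r ⊆ U ∧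
      r ∈ closure {w ∈ segment ℝ b c | ℓ w + Δ ≤ ℓ a ∨ ℓ a + Δ ≤ ℓ w} := by
  obtain ⟨r, hr, har, hcl⟩ := exists_segment_subset_mem_closure_diff h.isClosed hab hac
    {w | ℓ w < ℓ a + Δ ∧ ℓ a < ℓ w + Δ} fun r hr => IH a ha r (hbc hr.1) hr.2.2 hr.2.1
  refine ⟨r, hr, har, closure_mono ?_ hcl⟩
  rintro w ⟨hw, hwG⟩
  simp only [mem_ofPred_eq] at hwG
  exact ⟨hw, by omega⟩

theorem exists_low_point (h : IsLayering U ℓ) (hΔ : 4 ≤ Δ) (IH : ConvexBelowGap U ℓ Δ)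
    {p q z : E} (hq : q ∈ U) (hpq : ℓ q = ℓ p + Δ) (hpz : segment ℝ p z ⊆ U)
    (hqz : segment ℝ q z ⊆ U) (hℓz₁ : ℓ q ≤ ℓ z + 2) (hℓz₂ : ℓ z ≤ ℓ q + 2)
    (hnot : ¬ segment ℝ p q ⊆ U) :
    ∃ x ∈ segment ℝ z p, segment ℝ q x ⊆ U ∧ ℓ x ≤ ℓ p + 1 ∧ ℓ p ≤ ℓ x + 1 := by
  rw [segment_symm] at hpz hnot
  obtain ⟨x, hx, hqx, hcl⟩ := h.exists_sweep_stop IH hq hqz hpz hnot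
  obtain ⟨w, ⟨hw, hwΔ⟩, hxw⟩ := h.exists_adj_of_mem_closure (fun w hw => hpz hw.1) hcl
  have := h.level_le_of_mem_segment hpz hw
  have := h.level_le_of_mem_segment hpz hx
  exact ⟨x, hx, hqx, by omega, by omega⟩

theorem exists_high_point (h : IsLayering U ℓ) (hΔ : 4 ≤ Δ) (IH : ConvexBelowGap U ℓ Δ)
    {p q x : E} (hp : p ∈ U) (hpq : ℓ q = ℓ p + Δ) (hpx : segment ℝ p x ⊆ U)
    (hxq : segment ℝ x q ⊆ U) (hℓx₁ : ℓ x ≤ ℓ p + 1) (hℓx₂ : ℓ p ≤ ℓ x + 1)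
    (hnot : ¬ segment ℝ p q ⊆ U) :
    ∃ y ∈ segment ℝ x q, segment ℝ p y ⊆ U ∧ y ∈ closure (levelBand U ℓ (ℓ q)) := by
  obtain ⟨y, hy, hpy, hcl⟩ := h.exists_sweep_stop IH hp hpx hxq hnot
  refine ⟨y, hy, hpy, closure_mono ?_ hcl⟩
  rintro w ⟨hw, hwΔ⟩
  have := h.level_le_of_mem_segment hxq hw
  exact ⟨hxq hw, by omega, by omega⟩

theorem exists_closer_point (h : IsLayering U ℓ) (hΔ : 4 ≤ Δ) (IH : ConvexBelowGap U ℓ Δ)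
    {p q z : E} (hp : p ∈ U) (hq : q ∈ U) (hpq : ℓ q = ℓ p + Δ) (hpz : segment ℝ p z ⊆ U)
    (hqz : segment ℝ q z ⊆ U) (hz : z ∈ closure (levelBand U ℓ (ℓ q)))
    (hnot : ¬ segment ℝ p q ⊆ U) :
    ∃ x ∈ segment ℝ z p, x ≠ z ∧ ∃ y ∈ segment ℝ x q, segment ℝ p y ⊆ U ∧
      segment ℝ q y ⊆ U ∧ y ∈ closure (levelBand U ℓ (ℓ q)) := by
  obtain ⟨w, ⟨-, hwq⟩, hzw⟩ := h.exists_adj_of_mem_closure (fun w hw => hw.1) hz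
  obtain ⟨x, hx, hqx, hℓx₁, hℓx₂⟩ :=
    h.exists_low_point hΔ IH hq hpq hpz hqz (by omega) (by omega) hnot
  have hpx : segment ℝ p x ⊆ U := ((convex_segment p z).segment_subset
    (left_mem_segment ℝ p z) (by rwa [segment_symm])).trans hpz
  have hxq : segment ℝ x q ⊆ U := by rwa [segment_symm]
  obtain ⟨y, hy, hpy, hyY⟩ := h.exists_high_point hΔ IH hp hpq hpx hxq hℓx₁ hℓx₂ hnot
  have hqy : segment ℝ q y ⊆ U := ((convex_segment q x).segment_subset
    (left_mem_segment ℝ q x) (by rwa [segment_symm])).trans hqx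
  refine ⟨x, hx, ?_, y, hy, hpy, hqy, hyY⟩
  rintro rfl
  omega

variable [StrictConvexSpace ℝ E] in
theorem segment_subset_of_level_eq_add (h : IsLayering U ℓ) (hΔ : 4 ≤ Δ)
    (IH : ConvexBelowGap U ℓ Δ) {p q : E} (hp : p ∈ U) (hq : q ∈ U) (hpq : ℓ q = ℓ p + Δ) :
    segment ℝ p q ⊆ U := by
  by_contra hnot
  obtain ⟨y₀, hy₀, hy₀q⟩ := h.exists_pred q hq (by omega)
  -- `ℓ` is not continuous: the closure is what makes the set `Z` of candidate apexes compact.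
  set Y := closure (levelBand U ℓ (ℓ q))
  set K := convexHull ℝ {p, q, y₀}
  have hKp : p ∈ K := subset_convexHull ℝ _ (by simp)
  have hKq : q ∈ K := subset_convexHull ℝ _ (by simp)
  set Z := K ∩ ({z | segment ℝ p z ⊆ U} ∩ {z | segment ℝ q z ⊆ U} ∩ Y)
  have hZ : IsCompact Z := ((Set.toFinite _).isCompact_convexHull ℝ).inter_right
    (((isClosed_setOf_segment_subset h.isClosed p).inter
      (isClosed_setOf_segment_subset h.isClosed q)).inter isClosed_closure)
  have hy₀Z : y₀ ∈ Z := ⟨subset_convexHull ℝ _ (by simp),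
    ⟨IH p hp y₀ hy₀ (by omega) (by omega), h.segment_subset q hq y₀ hy₀ (by omega) (by omega)⟩,
    subset_closure ⟨hy₀, by omega, by omega⟩⟩
  obtain ⟨z, ⟨hzK, ⟨hpz, hqz⟩, hzY⟩, hmin⟩ :=
    hZ.exists_isMinOn ⟨y₀, hy₀Z⟩ (f := fun w => dist w p + dist w q) (by fun_prop)
  have hzpq : dist p q < dist z p + dist z q := by
    refine (dist_triangle_left p q z).lt_of_ne fun heq => hnot ?_
    have hz : z ∈ segment ℝ p q :=
      mem_segment_iff_wbtw.2 (dist_add_dist_eq_iff.1 (by rw [dist_comm p z]; exact heq.symm))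
    exact (segment_subset_union_of_mem hz).trans (union_subset hpz (segment_symm ℝ q z ▸ hqz))
  obtain ⟨x, hx, hxz, y, hy, hpy, hqy, hyY⟩ :=
    h.exists_closer_point hΔ IH hp hq hpq hpz hqz hzY hnot
  have hyK : y ∈ K := (convex_convexHull ℝ _).segment_subset
    ((convex_convexHull ℝ _).segment_subset hzK hKp hx) hKq hy
  exact (isMinOn_iff.1 hmin y ⟨hyK, ⟨hpy, hqy⟩, hyY⟩).not_gt
    (dist_add_dist_lt_of_mem_segment hzpq hx hxz hy)

end Step

variable [StrictConvexSpace ℝ E] in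
theorem convex (h : IsLayering U ℓ) : Convex ℝ U := by
  have hgap : ∀ Δ, 4 ≤ Δ → ConvexBelowGap U ℓ Δ := by
    intro Δ hΔ
    induction Δ, hΔ using Nat.le_induction with
    | base => exact fun x hx y hy hxy hyx => h.segment_subset x hx y hy (by omega) (by omega)
    | succ Δ hΔ IH =>
      intro x hx y hy hxy hyx
      by_cases hlt : ℓ x < ℓ y + Δ ∧ ℓ y < ℓ x + Δ
      · exact IH x hx y hy hlt.1 hlt.2
      rcases le_total (ℓ x) (ℓ y) with hle | hle
      · exact h.segment_subset_of_level_eq_add hΔ IH hx hy (by omega)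
      · rw [segment_symm]
        exact h.segment_subset_of_level_eq_add hΔ IH hy hx (by omega)
  exact convex_iff_segment_subset.2 fun x hx y hy =>
    hgap (ℓ x + ℓ y + 4) (by omega) x hx y hy (by omega) (by omega)

end IsLayering

end Layering

section Code

variable {n d k : ℕ}

open Classical in
def codewordAt (X : Fin n → Set (Euc d)) (z : Euc d) : Finset (Fin n) :=
  Finset.univ.filter (z ∈ X ·)

open Classical in
def codeLevel (c : Fin k → Finset (Fin n)) (X : Fin n → Set (Euc d)) (z : Euc d) : ℕ :=
  if h : ∃ m, c m = codewordAt X z then h.choose else 0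

variable {X : Fin n → Set (Euc d)} {c : Fin k → Finset (Fin n)}

theorem mem_codewordAt {z : Euc d} {i : Fin n} : i ∈ codewordAt X z ↔ z ∈ X i := by
  simp [codewordAt]

theorem codewordAt_nonempty_iff {z : Euc d} : (codewordAt X z).Nonempty ↔ z ∈ ⋃ i, X i := by
  simp [Finset.Nonempty, mem_codewordAt]

theorem nonempty_of_range_eq (hrange : range c = {σ | σ ∈ codeOf X ∧ σ ≠ ∅}) (m : Fin k) :
    (c m).Nonempty := by
  have hm : c m ∈ range c := mem_range_self m
  rw [hrange] at hm
  exact Finset.nonempty_iff_ne_empty.2 hm.2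

theorem exists_eq_codeLevel (hrange : range c = {σ | σ ∈ codeOf X ∧ σ ≠ ∅}) {z : Euc d}
    (hz : z ∈ ⋃ i, X i) : ∃ m : Fin k, c m = codewordAt X z ∧ (m : ℕ) = codeLevel c X z := by
  have hex : ∃ m, c m = codewordAt X z := by
    rw [← mem_range, hrange]
    exact ⟨⟨z, fun i => mem_codewordAt.symm⟩,
      Finset.nonempty_iff_ne_empty.1 (codewordAt_nonempty_iff.2 hz)⟩
  exact ⟨hex.choose, hex.choose_spec, by simp [codeLevel, hex]⟩

theorem codeLevel_adj_of_subset (hrange : range c = {σ | σ ∈ codeOf X ∧ σ ≠ ∅})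
    (honly : ∀ i j : Fin k, c i ⊆ c j → i = j ∨
      ((j : ℕ) = (i : ℕ) + 1 ∧ Even (i : ℕ)) ∨
      ((i : ℕ) = (j : ℕ) + 1 ∧ ¬ Even (j : ℕ)))
    {w z : Euc d} (hw : w ∈ ⋃ i, X i) (hz : z ∈ ⋃ i, X i)
    (hwz : codewordAt X w ⊆ codewordAt X z) :
    codeLevel c X w ≤ codeLevel c X z + 1 ∧ codeLevel c X z ≤ codeLevel c X w + 1 := by
  obtain ⟨i, hi, hiw⟩ := exists_eq_codeLevel hrange hw
  obtain ⟨j, hj, hjz⟩ := exists_eq_codeLevel hrange hz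
  rw [← hi, ← hj] at hwz
  rcases honly i j hwz with rfl | ⟨hij, -⟩ | ⟨hji, -⟩ <;> omega

theorem codewordAt_eq_of_codeLevel_eq (hrange : range c = {σ | σ ∈ codeOf X ∧ σ ≠ ∅})
    {x y : Euc d} (hx : x ∈ ⋃ i, X i) (hy : y ∈ ⋃ i, X i)
    (hxy : codeLevel c X x = codeLevel c X y) :
    codewordAt X x = codewordAt X y := by
  obtain ⟨i, hi, hix⟩ := exists_eq_codeLevel hrange hx
  obtain ⟨j, hj, hjy⟩ := exists_eq_codeLevel hrange hy
  rw [← hi, ← hj, Fin.ext (hix.trans (hxy.trans hjy.symm))]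

theorem inter_nonempty_of_le_add_three (hne : ∀ m, (c m).Nonempty)
    (hchain : ∀ i j : Fin k, (j : ℕ) = (i : ℕ) + 1 →
      (Even (i : ℕ) → c i ⊂ c j) ∧ (¬ Even (i : ℕ) → c j ⊂ c i))
    (htriple : ∀ i j l : Fin k, (j : ℕ) = (i : ℕ) + 1 → (l : ℕ) = (j : ℕ) + 1 →
      (c i ∩ c j ∩ c l).Nonempty)
    {i j : Fin k} (hij : (i : ℕ) ≤ j) (hji : (j : ℕ) ≤ i + 3) : (c i ∩ c j).Nonempty := by
  obtain ⟨g, hg⟩ : ∃ g, (j : ℕ) = i + g := ⟨j - i, by omega⟩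
  rcases (by omega : g = 0 ∨ g = 1 ∨ g = 2 ∨ g = 3) with rfl | rfl | rfl | rfl
  · rw [Fin.ext (hg.trans (add_zero _)), Finset.inter_self]
    exact hne i
  · by_cases hi : Even (i : ℕ)
    · rw [Finset.inter_eq_left.2 ((hchain i j hg).1 hi).subset]
      exact hne i
    · rw [Finset.inter_eq_right.2 ((hchain i j hg).2 hi).subset]
      exact hne j
  · exact (htriple i ⟨i + 1, by omega⟩ j rfl hg).mono
      (Finset.inter_subset_inter Finset.inter_subset_left le_rfl)
  · set m₁ : Fin k := ⟨i + 1, by omega⟩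
    set m₂ : Fin k := ⟨i + 2, by omega⟩
    by_cases hi : Even (i : ℕ)
    · have hm₂j : c m₂ ⊆ c j :=
        ((hchain m₂ j (by simp only [m₂]; omega)).1 (hi.add even_two)).subset
      exact (htriple i m₁ m₂ rfl rfl).mono (Finset.inter_subset_inter Finset.inter_subset_left hm₂j)
    · have hm₁i : c m₁ ⊆ c i := ((hchain i m₁ rfl).2 hi).subset
      exact (htriple m₁ m₂ j rfl (by simp only [m₂]; omega)).mono
        (Finset.inter_subset_inter (Finset.inter_subset_left.trans hm₁i) le_rfl)

theorem isLayering_iUnion (hconv : ∀ i, Convex ℝ (X i)) (hclosed : ∀ i, IsClosed (X i))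
    (hinj : Function.Injective c)
    (hrange : range c = {σ | σ ∈ codeOf X ∧ σ ≠ ∅})
    (hchain : ∀ i j : Fin k, (j : ℕ) = (i : ℕ) + 1 →
      (Even (i : ℕ) → c i ⊂ c j) ∧ (¬ Even (i : ℕ) → c j ⊂ c i))
    (honly : ∀ i j : Fin k, c i ⊆ c j → i = j ∨
      ((j : ℕ) = (i : ℕ) + 1 ∧ Even (i : ℕ)) ∨
      ((i : ℕ) = (j : ℕ) + 1 ∧ ¬ Even (j : ℕ)))
    (htriple : ∀ i j l : Fin k, (j : ℕ) = (i : ℕ) + 1 → (l : ℕ) = (j : ℕ) + 1 →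
      (c i ∩ c j ∩ c l).Nonempty) :
    IsLayering (⋃ i, X i) (codeLevel c X) where
  isClosed := isClosed_iUnion_of_finite hclosed
  eventually_adj z hz := by
    have hloc : ∀ᶠ w in 𝓝 z, ∀ i, w ∈ X i → z ∈ X i := by
      refine eventually_all.2 fun i => ?_
      by_cases hzi : z ∈ X i
      · exact Eventually.of_forall fun _ _ => hzi
      · exact eventually_of_mem ((hclosed i).isOpen_compl.mem_nhds hzi)
          fun w hw hwi => absurd hwi hw
    exact hloc.mono fun w hwz hw => codeLevel_adj_of_subset hrange honly hw hz
      fun i hi => mem_codewordAt.2 (hwz i (mem_codewordAt.1 hi))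
  adj_of_mem_segment x hx y hy hxy z hz hzU := by
    have hsub : codewordAt X x ⊆ codewordAt X z := fun i hi => by
      have hi' : i ∈ codewordAt X y := codewordAt_eq_of_codeLevel_eq hrange hx hy hxy ▸ hi
      rw [mem_codewordAt] at hi hi' ⊢
      exact (hconv i).segment_subset hi hi' hz
    exact (codeLevel_adj_of_subset hrange honly hx hzU hsub).symm
  segment_subset x hx y hy hxy hyx := by
    obtain ⟨i, hi, hix⟩ := exists_eq_codeLevel hrange hx
    obtain ⟨j, hj, hjy⟩ := exists_eq_codeLevel hrange hy
    obtain ⟨a, ha⟩ : (c i ∩ c j).Nonempty := by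
      rcases le_total (i : ℕ) j with hle | hle
      · exact inter_nonempty_of_le_add_three (nonempty_of_range_eq hrange) hchain htriple hle
          (by omega)
      · rw [Finset.inter_comm]
        exact inter_nonempty_of_le_add_three (nonempty_of_range_eq hrange) hchain htriple hle
          (by omega)
    rw [Finset.mem_inter, hi, hj, mem_codewordAt, mem_codewordAt] at ha
    exact ((hconv a).segment_subset ha.1 ha.2).trans (subset_iUnion X a)
  exists_pred x hx hpos := by
    obtain ⟨i, -, hix⟩ := exists_eq_codeLevel hrange hx
    set m : Fin k := ⟨i - 1, by omega⟩
    have hm : c m ∈ range c := mem_range_self m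
    rw [hrange] at hm
    obtain ⟨⟨y, hy⟩, hne⟩ := hm
    have hcy : codewordAt X y = c m := Finset.ext fun i => mem_codewordAt.trans (hy i)
    have hyU : y ∈ ⋃ i, X i :=
      codewordAt_nonempty_iff.1 (hcy ▸ Finset.nonempty_iff_ne_empty.2 hne)
    obtain ⟨j, hj, hjy⟩ := exists_eq_codeLevel hrange hyU
    refine ⟨y, hyU, ?_⟩
    rw [← hjy, hinj (hj.trans hcy)]
    simp only [m]
    omega

end Code

/-- Rigid structures: if the nonempty codewords of the code of a closed convex realization
`X` can be enumerated `c_0, …, c_{k-1}` with alternating strict containments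
`c_0 ⊂ c_1 ⊃ c_2 ⊂ c_3 ⊃ ⋯`, no other containments among distinct nonempty codewords,
and every three consecutive codewords having nonempty intersection, then `⋃ i, X i`
is convex. -/
theorem rigid_structure_union_convex {n d k : ℕ} (X : Fin n → Set (Euc d))
    (hconv : ∀ i, Convex ℝ (X i)) (hclosed : ∀ i, IsClosed (X i))
    (c : Fin k → Finset (Fin n))
    (hinj : Function.Injective c)
    (hrange : Set.range c = {σ | σ ∈ codeOf X ∧ σ ≠ ∅})
    (hchain : ∀ i j : Fin k, (j : ℕ) = (i : ℕ) + 1 →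
      (Even (i : ℕ) → c i ⊂ c j) ∧ (¬ Even (i : ℕ) → c j ⊂ c i))
    (honly : ∀ i j : Fin k, c i ⊆ c j → i = j ∨
      ((j : ℕ) = (i : ℕ) + 1 ∧ Even (i : ℕ)) ∨
      ((i : ℕ) = (j : ℕ) + 1 ∧ ¬ Even (j : ℕ)))
    (htriple : ∀ i j l : Fin k, (j : ℕ) = (i : ℕ) + 1 → (l : ℕ) = (j : ℕ) + 1 →
      (c i ∩ c j ∩ c l).Nonempty) :
    Convex ℝ (⋃ i, X i) :=
  (isLayering_iUnion hconv hclosed hinj hrange hchain honly htriple).convex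
end
end
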